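/- Let Γ be a weighted congestion game fulfilling Conditions 1–2 and Γ̂ its Ψ̂-game. Then Γ possesses a d!-approximate pure Nash equilibrium; in particular, every pure Nash equilibrium of Γ̂ (which exists) is a d!-approximate pure Nash equilibrium of Γ. -/

import Mathlib

/-!
Adding a weight `x` to a load `M` raises `Ψ̂_{k+1}` by `(k+1)·x·Ψ̂_k(x ::ₘ M)`. Hence `Φ̂` is
an exact potential of the `Ψ̂`-game, and a minimiser of `Φ̂` over the finitely many profiles is
a pure Nash equilibrium of `Γ̂`. For nonnegative weights of total `L` one has
`L^k ≤ Ψ̂_k ≤ k!·L^k`, so `c_u ≤ ĉ_u ≤ d!·c_u`, which turns every pure Nash equilibrium of `Γ̂`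
into a `d!`-approximate one of `Γ`.
-/


/-- `hpoly k l` is the complete homogeneous symmetric polynomial of degree `k`
evaluated at the entries of the list `l`, i.e. the sum of all monomials of
total degree `k` in the elements of `l`. -/
noncomputable def hpoly : ℕ → List ℝ → ℝ
  | 0, _ => 1
  | _ + 1, [] => 0
  | k + 1, a :: l => a * hpoly k (a :: l) + hpoly (k + 1) l
termination_by k l => (k, l.length)

/-- The `k`-order `Ψ̂`-function of a multiset `M` of reals:
`Ψ̂_k(M) = k! ·` (sum of all monomials of total degree `k` in the elements of `M`).
In particular `Ψ̂_0(M) = 1` and `Ψ̂_k(∅) = 0` for `k ≥ 1`. -/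
noncomputable def psiHat (k : ℕ) (M : Multiset ℝ) : ℝ :=
  (Nat.factorial k : ℝ) * hpoly k M.toList

/-- A weighted congestion game with `N` players, `E` resources, polynomial latency
functions of degree at most `d` (Condition 2, with coefficient-ratio bound `A`),
and players' weights in `[1, W]` (Condition 1). -/
structure WCGame (N E d : ℕ) (W A : ℝ) where
  /-- the strategy set of each player: a set of nonempty subsets of resources -/
  strat : Fin N → Set (Finset (Fin E))
  strat_nonempty : ∀ u, (strat u).Nonempty
  strat_valid : ∀ u, ∀ s ∈ strat u, s.Nonempty
  /-- the weight of each player -/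
  w : Fin N → ℝ
  /-- `a e k` is the coefficient of `x^k` in the latency function of resource `e` -/
  a : Fin E → ℕ → ℝ
  hd : 1 ≤ d
  hW : 1 ≤ W
  hw_lower : ∀ u, 1 ≤ w u
  hw_upper : ∀ u, w u ≤ W
  ha_nonneg : ∀ e k, 0 ≤ a e k
  ha_pos : ∀ e, 0 < ∑ k ∈ Finset.range (d + 1), a e k
  hA_pos : 0 < A
  hA_bound : ∀ e e' k k', k ≤ d → k' ≤ d → 0 < a e k → a e' k' ≤ A * a e k

namespace WCGame

/-- A (pure strategy) profile: a choice of a set of resources for every player. -/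
abbrev Profile (N E : ℕ) := Fin N → Finset (Fin E)

variable {N E d : ℕ} {W A : ℝ}

/-- A profile is feasible if every player uses one of her strategies. -/
def IsProfile (G : WCGame N E d W A) (S : Profile N E) : Prop :=
  ∀ u, S u ∈ G.strat u

/-- `U_e(S)`: the multiset of weights of the players using resource `e` in profile `S`. -/
noncomputable def load (G : WCGame N E d W A) (S : Profile N E) (e : Fin E) : Multiset ℝ :=
  (Finset.univ.filter (fun u => e ∈ S u)).val.map G.w

/-- The cost `c_u(S) = w_u · ∑_{e ∈ s_u} ∑_{k=0}^d a_{e,k} · L(U_e(S))^k` of player `u`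
in the original game `Γ`. -/
noncomputable def cost (G : WCGame N E d W A) (S : Profile N E) (u : Fin N) : ℝ :=
  G.w u * ∑ e ∈ S u, ∑ k ∈ Finset.range (d + 1), G.a e k * (G.load S e).sum ^ k

/-- The cost `ĉ_u(S) = w_u · ∑_{e ∈ s_u} ∑_{k=0}^d a_{e,k} · Ψ̂_k(U_e(S))` of player `u`
in the `Ψ̂`-game `Γ̂`. -/
noncomputable def hcost (G : WCGame N E d W A) (S : Profile N E) (u : Fin N) : ℝ :=
  G.w u * ∑ e ∈ S u, ∑ k ∈ Finset.range (d + 1), G.a e k * psiHat k (G.load S e)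

/-- The potential function `Φ̂(S) = ∑_e ∑_{k=0}^d (a_{e,k}/(k+1)) · Ψ̂_{k+1}(U_e(S))`
of the `Ψ̂`-game. -/
noncomputable def potHat (G : WCGame N E d W A) (S : Profile N E) : ℝ :=
  ∑ e : Fin E, ∑ k ∈ Finset.range (d + 1),
    G.a e k / ((k : ℝ) + 1) * psiHat (k + 1) (G.load S e)

/-- The approximate potential function `Φ(S) = ∑_e Ψ_e(L(U_e(S)))` with
`Ψ_e(x) = a_{e,0}·x + ∑_{k=1}^d a_{e,k}·(x^{k+1}/(k+1) + x^k/2)`. -/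
noncomputable def pot (G : WCGame N E d W A) (S : Profile N E) : ℝ :=
  ∑ e : Fin E,
    (G.a e 0 * (G.load S e).sum +
      ∑ k ∈ Finset.Icc 1 d,
        G.a e k * ((G.load S e).sum ^ (k + 1) / ((k : ℝ) + 1) + (G.load S e).sum ^ k / 2))

/-- `S` is a `ρ`-approximate pure Nash equilibrium w.r.t. the player costs `costFn`:
no player can decrease her cost by more than a factor `ρ` by a unilateral deviation. -/
def IsApproxPNE (G : WCGame N E d W A) (costFn : Profile N E → Fin N → ℝ) (ρ : ℝ)
    (S : Profile N E) : Prop :=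
  ∀ u, ∀ s' ∈ G.strat u, costFn S u ≤ ρ * costFn (Function.update S u s') u

/-- `sstar u` is a best response of player `u` to `S₋ᵤ` w.r.t. the costs `costFn`. -/
def IsBestResponses (G : WCGame N E d W A) (costFn : Profile N E → Fin N → ℝ)
    (S : Profile N E) (sstar : Fin N → Finset (Fin E)) : Prop :=
  ∀ u, sstar u ∈ G.strat u ∧
    ∀ s ∈ G.strat u, costFn (Function.update S u (sstar u)) u ≤ costFn (Function.update S u s) u

/-- One step of Algorithm 1 (the `1/(1-ε)` best response dynamic on the `Ψ̂`-game),
moving from profile `S` to profile `S'` by letting the chosen player `ut` (a player with a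
`1/(1-ε)`-move of maximum cost reduction) switch to her best response `sstar ut`. -/
def AlgOneStep (G : WCGame N E d W A) (ε : ℝ) (S S' : Profile N E) (ut : Fin N)
    (sstar : Fin N → Finset (Fin E)) : Prop :=
  G.IsBestResponses G.hcost S sstar ∧
  G.hcost S ut > (1 / (1 - ε)) * G.hcost (Function.update S ut (sstar ut)) ut ∧
  (∀ u, G.hcost S u > (1 / (1 - ε)) * G.hcost (Function.update S u (sstar u)) u →
    G.hcost S ut - G.hcost (Function.update S ut (sstar ut)) ut ≥
      G.hcost S u - G.hcost (Function.update S u (sstar u)) u) ∧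
  S' = Function.update S ut (sstar ut)

/-- One step of Algorithm 2 (the refined `ρ/(1-ε)` best response dynamic on `Γ`),
moving from profile `S` to profile `S'` by letting the chosen player `ut` (a player
maximizing `c_u(S) - ρ·c_u(s_u^*, S₋ᵤ)` among players with `ρ/(1-ε)`-moves) switch to
her best response `sstar ut`. -/
def AlgTwoStep (G : WCGame N E d W A) (ρ ε : ℝ) (S S' : Profile N E) (ut : Fin N)
    (sstar : Fin N → Finset (Fin E)) : Prop :=
  G.IsBestResponses G.cost S sstar ∧
  G.cost S ut > (ρ / (1 - ε)) * G.cost (Function.update S ut (sstar ut)) ut ∧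
  (∀ u, G.cost S u > (ρ / (1 - ε)) * G.cost (Function.update S u (sstar u)) u →
    G.cost S ut - ρ * G.cost (Function.update S ut (sstar ut)) ut ≥
      G.cost S u - ρ * G.cost (Function.update S u (sstar u)) u) ∧
  S' = Function.update S ut (sstar ut)

/-- `c_max`: the maximum cost of a player over all (feasible) profiles in `Γ`. -/
noncomputable def cMax (G : WCGame N E d W A) : ℝ :=
  sSup {x | ∃ S u, G.IsProfile S ∧ x = G.cost S u}

/-- `ĉ_max`: the maximum cost of a player over all (feasible) profiles in `Γ̂`. -/
noncomputable def hcMax (G : WCGame N E d W A) : ℝ :=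
  sSup {x | ∃ S u, G.IsProfile S ∧ x = G.hcost S u}

/-- `Φ̂_min`: the minimum of the potential `Φ̂` over all (feasible) profiles. -/
noncomputable def potHatMin (G : WCGame N E d W A) : ℝ :=
  sInf {x | ∃ S, G.IsProfile S ∧ x = G.potHat S}

/-- `a_min⁺`: the minimum positive coefficient of the latency functions. -/
noncomputable def aMinPos (G : WCGame N E d W A) : ℝ :=
  sInf {x | 0 < x ∧ ∃ e k, k ≤ d ∧ x = G.a e k}

end WCGame

open Finset

section CompleteHomogeneous

theorem hpoly_zero (l : List ℝ) : hpoly 0 l = 1 := by rw [hpoly]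

theorem hpoly_succ_nil (k : ℕ) : hpoly (k + 1) [] = 0 := by rw [hpoly]

theorem hpoly_succ_cons (k : ℕ) (a : ℝ) (l : List ℝ) :
    hpoly (k + 1) (a :: l) = a * hpoly k (a :: l) + hpoly (k + 1) l := by rw [hpoly]

theorem hpoly_one (l : List ℝ) : hpoly 1 l = l.sum := by
  induction l with
  | nil => simp [hpoly_succ_nil]
  | cons a l ih => simp [hpoly_succ_cons, hpoly_zero, ih]

theorem hpoly_nonneg {l : List ℝ} (hl : ∀ x ∈ l, 0 ≤ x) (k : ℕ) : 0 ≤ hpoly k l := by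
  induction l generalizing k with
  | nil => cases k <;> simp [hpoly_zero, hpoly_succ_nil]
  | cons a l ih =>
    obtain ⟨ha, hl⟩ := List.forall_mem_cons.1 hl
    induction k with
    | zero => simp [hpoly_zero]
    | succ k ihk =>
      rw [hpoly_succ_cons]
      have := ih hl (k + 1)
      positivity

theorem hpoly_le_sum_pow {l : List ℝ} (hl : ∀ x ∈ l, 0 ≤ x) (k : ℕ) :
    hpoly k l ≤ l.sum ^ k := by
  induction l generalizing k with
  | nil => cases k <;> simp [hpoly_zero, hpoly_succ_nil]
  | cons a l ih =>
    obtain ⟨ha, hl⟩ := List.forall_mem_cons.1 hl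
    have hs : 0 ≤ l.sum := List.sum_nonneg hl
    induction k with
    | zero => simp [hpoly_zero]
    | succ k ihk =>
      rw [hpoly_succ_cons, List.sum_cons]
      have hsk : l.sum ^ (k + 1) ≤ l.sum * (a + l.sum) ^ k := by
        rw [pow_succ']
        exact mul_le_mul_of_nonneg_left (pow_le_pow_left₀ hs (by linarith) k) hs
      calc a * hpoly k (a :: l) + hpoly (k + 1) l
          ≤ a * (a + l.sum) ^ k + l.sum * (a + l.sum) ^ k := by
            rw [List.sum_cons] at ihk
            nlinarith [mul_le_mul_of_nonneg_left ihk ha, ih hl (k + 1)]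
        _ = (a + l.sum) ^ (k + 1) := by ring

/-- The discrete form of Euler's identity `∑ xᵢ ∂ᵢ h_{k+1} = (k+1) h_{k+1}`, using
`∂ᵢ h_{k+1} ≥ h_k`. -/
theorem sum_mul_hpoly_le {l : List ℝ} (hl : ∀ x ∈ l, 0 ≤ x) (k : ℕ) :
    l.sum * hpoly k l ≤ (k + 1) * hpoly (k + 1) l := by
  induction l generalizing k with
  | nil => simp [hpoly_succ_nil]
  | cons a l ih =>
    have hnn := hpoly_nonneg hl
    obtain ⟨ha, hl⟩ := List.forall_mem_cons.1 hl
    induction k with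
    | zero => simp [hpoly_zero, hpoly_one]
    | succ k ihk =>
      have hsplit := hpoly_succ_cons k a l
      have ihl := ih hl (k + 1)
      rw [hpoly_succ_cons (k + 1), List.sum_cons] at *
      push_cast at *
      nlinarith [mul_le_mul_of_nonneg_left ihk ha, mul_nonneg (mul_nonneg ha ha) (hnn k),
        congrArg (l.sum * ·) hsplit]

theorem sum_pow_le_factorial_mul_hpoly {l : List ℝ} (hl : ∀ x ∈ l, 0 ≤ x) (k : ℕ) :
    l.sum ^ k ≤ k.factorial * hpoly k l := by
  induction k with
  | zero => simp [hpoly_zero]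
  | succ k ih =>
    have hs : 0 ≤ l.sum := List.sum_nonneg hl
    calc l.sum ^ (k + 1) = l.sum * l.sum ^ k := pow_succ' _ _
      _ ≤ l.sum * (k.factorial * hpoly k l) := mul_le_mul_of_nonneg_left ih hs
      _ = k.factorial * (l.sum * hpoly k l) := by ring
      _ ≤ k.factorial * ((k + 1) * hpoly (k + 1) l) :=
        mul_le_mul_of_nonneg_left (sum_mul_hpoly_le hl k) (by positivity)
      _ = (k + 1).factorial * hpoly (k + 1) l := by push_cast [Nat.factorial_succ]; ring

theorem hpoly_swap (a b : ℝ) (l : List ℝ) :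
    ∀ k, hpoly k (a :: b :: l) = hpoly k (b :: a :: l)
  | 0 => by simp [hpoly_zero]
  | 1 => by simp only [hpoly_succ_cons, hpoly_zero]; ring
  | k + 2 => by
    have h0 := hpoly_swap a b l k
    have h1 := hpoly_swap a b l (k + 1)
    simp only [hpoly_succ_cons] at h1 ⊢
    linear_combination (a + b) * h1 - a * b * h0

theorem List.Perm.hpoly_eq {l l' : List ℝ} (h : l.Perm l') (k : ℕ) :
    hpoly k l = hpoly k l' := by
  induction h generalizing k with
  | nil => rfl
  | cons a _ ih =>
    induction k with
    | zero => simp [hpoly_zero]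
    | succ k ihk => rw [hpoly_succ_cons, hpoly_succ_cons, ihk, ih]
  | swap a b l => exact hpoly_swap b a l k
  | trans _ _ ih₁ ih₂ => rw [ih₁, ih₂]

end CompleteHomogeneous

section PsiHat

theorem psiHat_cons (k : ℕ) (a : ℝ) (M : Multiset ℝ) :
    psiHat k (a ::ₘ M) = k.factorial * hpoly k (a :: M.toList) := by
  have hperm : (a ::ₘ M).toList.Perm (a :: M.toList) := by
    rw [← Multiset.coe_eq_coe, Multiset.coe_toList, ← Multiset.cons_coe, Multiset.coe_toList]
  rw [psiHat, hperm.hpoly_eq]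

theorem psiHat_succ_cons (k : ℕ) (a : ℝ) (M : Multiset ℝ) :
    psiHat (k + 1) (a ::ₘ M) = (k + 1) * a * psiHat k (a ::ₘ M) + psiHat (k + 1) M := by
  rw [psiHat_cons, hpoly_succ_cons, psiHat_cons, psiHat, Nat.factorial_succ]
  push_cast
  ring

theorem sum_pow_le_psiHat {M : Multiset ℝ} (hM : ∀ x ∈ M, 0 ≤ x) (k : ℕ) :
    M.sum ^ k ≤ psiHat k M := by
  simpa [psiHat, Multiset.sum_toList] using
    sum_pow_le_factorial_mul_hpoly (fun x hx => hM x (Multiset.mem_toList.1 hx)) k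

theorem psiHat_le_factorial_mul_sum_pow {M : Multiset ℝ} (hM : ∀ x ∈ M, 0 ≤ x) (k : ℕ) :
    psiHat k M ≤ k.factorial * M.sum ^ k := by
  have := hpoly_le_sum_pow (fun x hx => hM x (Multiset.mem_toList.1 hx)) k
  rw [Multiset.sum_toList] at this
  exact mul_le_mul_of_nonneg_left this (by positivity)

end PsiHat

namespace WCGame

variable {N E d : ℕ} {W A : ℝ} (G : WCGame N E d W A)

theorem load_nonneg (S : Profile N E) (e : Fin E) : ∀ x ∈ G.load S e, 0 ≤ x := by
  intro x hx
  obtain ⟨v, -, rfl⟩ := Multiset.mem_map.1 hx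
  linarith [G.hw_lower v]

/-- The latency `ĉ_e` of resource `e` in `Γ̂` at load `M`. -/
noncomputable def latencyHat (e : Fin E) (M : Multiset ℝ) : ℝ :=
  ∑ k ∈ range (d + 1), G.a e k * psiHat k M

/-- The contribution of resource `e` at load `M` to the potential `Φ̂`. -/
noncomputable def potentialHat (e : Fin E) (M : Multiset ℝ) : ℝ :=
  ∑ k ∈ range (d + 1), G.a e k / (k + 1) * psiHat (k + 1) M

theorem potentialHat_cons_sub (e : Fin E) (x : ℝ) (M : Multiset ℝ) :
    G.potentialHat e (x ::ₘ M) - G.potentialHat e M = x * G.latencyHat e (x ::ₘ M) := by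
  rw [potentialHat, potentialHat, latencyHat, ← sum_sub_distrib, mul_sum]
  refine sum_congr rfl fun k _ => ?_
  rw [psiHat_succ_cons]
  field_simp
  ring

theorem load_update (S : Profile N E) (u : Fin N) (s : Finset (Fin E)) (e : Fin E) :
    G.load (Function.update S u s) e =
      (if e ∈ s then {G.w u} else 0) + ((univ.erase u).filter (e ∈ S ·)).val.map G.w := by
  have hothers : (univ.erase u).filter (e ∈ Function.update S u s ·) =
      (univ.erase u).filter (e ∈ S ·) :=
    filter_congr fun v hv => by rw [Function.update_of_ne (ne_of_mem_erase hv)]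
  conv_lhs => rw [load, ← insert_erase (mem_univ u), filter_insert, Function.update_self, hothers]
  split_ifs
  · rw [insert_val_of_notMem (by simp), Multiset.map_cons, Multiset.singleton_add]
  · rw [zero_add]

theorem hcost_eq_sum_ite (S : Profile N E) (u : Fin N) :
    G.hcost S u = ∑ e, if e ∈ S u then G.w u * G.latencyHat e (G.load S e) else 0 := by
  rw [sum_ite_mem, univ_inter, hcost, mul_sum]
  rfl

theorem potHat_update_sub (S : Profile N E) (u : Fin N) (s : Finset (Fin E)) :
    G.potHat (Function.update S u s) - G.potHat S =
      G.hcost (Function.update S u s) u - G.hcost S u := by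
  have hS e := G.load_update S u (S u) e
  simp only [Function.update_eq_self] at hS
  rw [hcost_eq_sum_ite, hcost_eq_sum_ite, potHat, potHat, ← sum_sub_distrib, ← sum_sub_distrib]
  refine sum_congr rfl fun e _ => ?_
  have hcons := G.potentialHat_cons_sub e (G.w u) (((univ.erase u).filter (e ∈ S ·)).val.map G.w)
  change G.potentialHat e _ - G.potentialHat e _ = _
  rw [G.load_update S u s e, hS e, Function.update_self]
  split_ifs <;> simp only [Multiset.singleton_add, zero_add] <;> linarith

variable {G} in
theorem IsProfile.update {S : Profile N E} (hS : G.IsProfile S) {u : Fin N} {s : Finset (Fin E)}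
    (hs : s ∈ G.strat u) : G.IsProfile (Function.update S u s) := by
  intro v
  rcases eq_or_ne v u with rfl | hne
  · rwa [Function.update_self]
  · rw [Function.update_of_ne hne]
    exact hS v

theorem exists_isApproxPNE_hcost_one : ∃ S, G.IsProfile S ∧ G.IsApproxPNE G.hcost 1 S := by
  classical
  have hprofile : (univ.filter G.IsProfile).Nonempty :=
    ⟨fun u => (G.strat_nonempty u).some,
      mem_filter.2 ⟨mem_univ _, fun u => (G.strat_nonempty u).some_mem⟩⟩
  obtain ⟨S, hS, hmin⟩ := (univ.filter G.IsProfile).exists_min_image G.potHat hprofile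
  replace hS := (mem_filter.1 hS).2
  refine ⟨S, hS, fun u s hs => ?_⟩
  have := hmin _ (mem_filter.2 ⟨mem_univ _, hS.update hs⟩)
  linarith [G.potHat_update_sub S u s]

theorem cost_le_hcost (S : Profile N E) (u : Fin N) : G.cost S u ≤ G.hcost S u := by
  rw [cost, hcost]
  gcongr with e _ k
  · linarith [G.hw_lower u]
  · exact G.ha_nonneg e k
  · exact sum_pow_le_psiHat (G.load_nonneg S e) k

theorem hcost_le_factorial_mul_cost (S : Profile N E) (u : Fin N) :
    G.hcost S u ≤ d.factorial * G.cost S u := by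
  set L := fun e => (G.load S e).sum
  have hterm e k (hk : k ∈ range (d + 1)) :
      G.a e k * psiHat k (G.load S e) ≤ d.factorial * (G.a e k * L e ^ k) := by
    have hLk : 0 ≤ L e ^ k := pow_nonneg (Multiset.sum_nonneg (G.load_nonneg S e)) k
    have hkd : k.factorial ≤ d.factorial := Nat.factorial_le (Nat.lt_succ_iff.1 (mem_range.1 hk))
    calc G.a e k * psiHat k (G.load S e)
        ≤ G.a e k * (k.factorial * L e ^ k) :=
          mul_le_mul_of_nonneg_left (psiHat_le_factorial_mul_sum_pow (G.load_nonneg S e) k)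
            (G.ha_nonneg e k)
      _ ≤ G.a e k * (d.factorial * L e ^ k) := by
          gcongr
          exact G.ha_nonneg e k
      _ = d.factorial * (G.a e k * L e ^ k) := by ring
  calc G.hcost S u
      ≤ G.w u * ∑ e ∈ S u, ∑ k ∈ range (d + 1), d.factorial * (G.a e k * L e ^ k) :=
        mul_le_mul_of_nonneg_left (sum_le_sum fun e _ => sum_le_sum fun k hk => hterm e k hk)
          (by linarith [G.hw_lower u])
    _ = d.factorial * G.cost S u := by
        simp only [cost, L, ← mul_sum]
        ring

variable {G} in
theorem IsApproxPNE.of_le_of_le_mul {c ĉ : Profile N E → Fin N → ℝ} {σ ρ : ℝ}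
    {S : Profile N E} (hσ : 0 ≤ σ) (hle : ∀ S u, c S u ≤ ĉ S u) (hle_mul : ∀ S u, ĉ S u ≤ ρ * c S u)
    (h : G.IsApproxPNE ĉ σ S) : G.IsApproxPNE c (σ * ρ) S := fun u s hs =>
  calc c S u ≤ ĉ S u := hle S u
    _ ≤ σ * ĉ (Function.update S u s) u := h u s hs
    _ ≤ σ * (ρ * c (Function.update S u s) u) := mul_le_mul_of_nonneg_left (hle_mul _ u) hσ
    _ = σ * ρ * c (Function.update S u s) u := (mul_assoc _ _ _).symm

end WCGame

open WCGame in
/-- Theorem 1 (second part): `Γ` possesses a `d!`-approximate pure Nash equilibrium;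
in particular, a pure Nash equilibrium of the `Ψ̂`-game `Γ̂` exists, and every pure Nash
equilibrium of `Γ̂` is a `d!`-approximate pure Nash equilibrium of `Γ`. -/
theorem exists_factorial_approxPNE {N E d : ℕ} {W A : ℝ} (G : WCGame N E d W A) :
    (∃ S : Profile N E, G.IsProfile S ∧ G.IsApproxPNE G.hcost 1 S) ∧
      (∀ S : Profile N E, G.IsProfile S → G.IsApproxPNE G.hcost 1 S →
        G.IsApproxPNE G.cost (Nat.factorial d : ℝ) S) :=
  ⟨G.exists_isApproxPNE_hcost_one, fun _ _ hS => by
    simpa only [one_mul] using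
      hS.of_le_of_le_mul zero_le_one G.cost_le_hcost G.hcost_le_factorial_mul_cost⟩
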